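/- Let H_x be an m₁ × n matrix and H_z an m₂ × n matrix over 𝔽₂ with H_x·H_zᵀ = 0, and set k = n − rank H_x − rank H_z. Let ξ = row space of H_x (the image of H_xᵀ), η = row space of H_z, so ker H_x and ker H_z are subspaces of 𝔽₂ⁿ. Let α be any subspace of 𝔽₂ⁿ and α^⊥ its orthogonal complement with respect to the standard bilinear form ⟨u,v⟩ = Σᵢ uᵢvᵢ. Define ℓ_x = dim((ker H_z ∩ α) + ξ) − dim ξ, ℓ_z = dim((ker H_x ∩ α) + η) − dim η, ℓ'_x = dim((ker H_z ∩ α^⊥) + ξ) − dim ξ, ℓ'_z = dim((ker H_x ∩ α^⊥) + η) − dim η. Then ℓ_x + ℓ'_z = k and ℓ_z + ℓ'_x = k. -/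

import Mathlib

/-!
Since `ker H_z = η^⊥` and `ker H_x = ξ^⊥` for the standard form, and `H_x H_zᵀ = 0` says
`ξ ≤ η^⊥`, both identities are instances of one statement about a nondegenerate reflexive form:
`dim((η^⊥ ⊓ α) ⊔ ξ) + dim((ξ^⊥ ⊓ α^⊥) ⊔ η) = dim V`.
By the modular law the two summands are `dim(η^⊥ ⊓ α) + dim ξ - dim(α ⊓ ξ)` and
`dim(ξ^⊥ ⊓ α^⊥) + dim η - dim(α^⊥ ⊓ η)`, and the duality
`dim(W^⊥ ⊓ U) + dim W = dim U + dim(U^⊥ ⊓ W)` cancels the remaining terms.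
-/

open Module

/-- The standard bilinear form `⟨u,v⟩ = ∑ i, uᵢ vᵢ` on `𝔽₂ⁿ`. -/
def stdBilinForm (n : ℕ) : LinearMap.BilinForm (ZMod 2) (Fin n → ZMod 2) :=
  LinearMap.mk₂ (ZMod 2) (fun u v => ∑ i, u i * v i)
    (fun u u' v => by simp [add_mul, Finset.sum_add_distrib])
    (fun c u v => by simp [Finset.mul_sum, mul_assoc])
    (fun u v v' => by simp [mul_add, Finset.sum_add_distrib])
    (fun c u v => by simp [Finset.mul_sum, mul_left_comm])

open LinearMap (BilinForm)

namespace LinearMap.BilinForm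

lemma orthogonal_sup {R M : Type*} [CommSemiring R] [AddCommMonoid M] [Module R M]
    (B : BilinForm R M) (U W : Submodule R M) :
    B.orthogonal (U ⊔ W) = B.orthogonal U ⊓ B.orthogonal W := by
  ext v
  simp only [Submodule.mem_inf, mem_orthogonal_iff]
  refine ⟨fun h => ⟨fun u hu => h u (Submodule.mem_sup_left hu),
    fun w hw => h w (Submodule.mem_sup_right hw)⟩, ?_⟩
  rintro ⟨hU, hW⟩ _ hx
  obtain ⟨u, hu, w, hw, rfl⟩ := Submodule.mem_sup.mp hx
  rw [map_add, LinearMap.add_apply, hU u hu, hW w hw, add_zero]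

variable {K V : Type*} [Field K] [AddCommGroup V] [Module K V] [FiniteDimensional K V]
  {B : BilinForm K V}

lemma finrank_add_finrank_orthogonal_of_nondegenerate (hB : B.Nondegenerate)
    (W : Submodule K V) : finrank K W + finrank K (B.orthogonal W) = finrank K V := by
  rw [finrank_orthogonal hB]
  have := W.finrank_le
  omega

lemma finrank_orthogonal_inf_add_finrank (hB : B.Nondegenerate) (hr : B.IsRefl)
    (U W : Submodule K V) :
    finrank K ↥(B.orthogonal W ⊓ U) + finrank K W
      = finrank K U + finrank K ↥(B.orthogonal U ⊓ W) := by
  have hsup := Submodule.finrank_sup_add_finrank_inf_eq (B.orthogonal U) W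
  have hperp := finrank_add_finrank_orthogonal_of_nondegenerate hB (B.orthogonal U ⊔ W)
  rw [orthogonal_sup, orthogonal_orthogonal hB hr, inf_comm] at hperp
  have hU := finrank_add_finrank_orthogonal_of_nondegenerate hB U
  omega

theorem finrank_orthogonal_inf_sup_add_finrank_orthogonal_inf_sup (hB : B.Nondegenerate)
    (hr : B.IsRefl) {ξ η : Submodule K V} (hξη : ξ ≤ B.orthogonal η) (α : Submodule K V) :
    finrank K ↥((B.orthogonal η ⊓ α) ⊔ ξ)
      + finrank K ↥((B.orthogonal ξ ⊓ B.orthogonal α) ⊔ η) = finrank K V := by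
  have hηξ : η ≤ B.orthogonal ξ := fun y hy x hx => hr _ _ (hξη hx y hy)
  have h₁ := Submodule.finrank_sup_add_finrank_inf_eq (B.orthogonal η ⊓ α) ξ
  rw [inf_assoc, inf_of_le_right (inf_le_right.trans hξη)] at h₁
  have h₂ := Submodule.finrank_sup_add_finrank_inf_eq (B.orthogonal ξ ⊓ B.orthogonal α) η
  rw [inf_assoc, inf_of_le_right (inf_le_right.trans hηξ)] at h₂
  have h₃ := finrank_orthogonal_inf_add_finrank hB hr (B.orthogonal α) ξ
  rw [orthogonal_orthogonal hB hr] at h₃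
  have h₄ := finrank_orthogonal_inf_add_finrank hB hr η α
  have h₅ := finrank_add_finrank_orthogonal_of_nondegenerate hB α
  omega

end LinearMap.BilinForm

open LinearMap.BilinForm Matrix

lemma stdBilinForm_apply {n : ℕ} (u v : Fin n → ZMod 2) : stdBilinForm n u v = u ⬝ᵥ v := rfl

lemma stdBilinForm_isRefl (n : ℕ) : (stdBilinForm n).IsRefl := fun u v h => by
  rwa [stdBilinForm_apply, dotProduct_comm]

lemma stdBilinForm_nondegenerate (n : ℕ) : (stdBilinForm n).Nondegenerate :=
  (stdBilinForm_isRefl n).nondegenerate_iff_separatingLeft.mpr fun _ h =>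
    dotProduct_eq_zero_iff.mp h

lemma Matrix.ker_mulVecLin_eq_orthogonal_range_transpose {m : Type*} [Fintype m] {n : ℕ}
    (M : Matrix m (Fin n) (ZMod 2)) :
    LinearMap.ker M.mulVecLin = (stdBilinForm n).orthogonal (LinearMap.range Mᵀ.mulVecLin) := by
  ext v
  simp only [LinearMap.mem_ker, mem_orthogonal_iff, LinearMap.mem_range, forall_exists_index,
    forall_apply_eq_imp_iff, Matrix.mulVecLin_apply, stdBilinForm_apply,
    Matrix.mulVec_transpose, ← Matrix.dotProduct_mulVec, dotProduct_comm _ (M *ᵥ v),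
    dotProduct_eq_zero_iff]

lemma Matrix.range_transpose_mulVecLin_le_ker {R m₁ m₂ n : Type*} [CommSemiring R]
    [Fintype m₂] [Fintype n] {A : Matrix m₁ n R} {C : Matrix m₂ n R} (h : A * Cᵀ = 0) :
    LinearMap.range Cᵀ.mulVecLin ≤ LinearMap.ker A.mulVecLin := by
  rintro _ ⟨x, rfl⟩
  rw [LinearMap.mem_ker, Matrix.mulVecLin_apply, Matrix.mulVecLin_apply, Matrix.mulVec_mulVec, h,
    Matrix.zero_mulVec]

/-- Cleaning identity for CSS codes. Given `𝔽₂`-matrices `H_x, H_z`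
with `H_x H_zᵀ = 0`, `k = n − rk H_x − rk H_z`, row spaces `ξ = im H_xᵀ`, `η = im H_zᵀ`,
a subspace `α ⊆ 𝔽₂ⁿ`, and the numbers
`ℓ_x = dim((ker H_z ∩ α) + ξ) − dim ξ`, `ℓ_z = dim((ker H_x ∩ α) + η) − dim η`,
`ℓ'_x = dim((ker H_z ∩ α^⊥) + ξ) − dim ξ`, `ℓ'_z = dim((ker H_x ∩ α^⊥) + η) − dim η`,
one has `ℓ_x + ℓ'_z = k` and `ℓ_z + ℓ'_x = k`. -/
theorem cleaning_identity_CSS {n m₁ m₂ : ℕ}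
    (Hx : Matrix (Fin m₁) (Fin n) (ZMod 2)) (Hz : Matrix (Fin m₂) (Fin n) (ZMod 2))
    (hcss : Hx * Hz.transpose = 0)
    (k : ℤ) (hk : k = (n : ℤ) - Hx.rank - Hz.rank)
    (ξ η : Submodule (ZMod 2) (Fin n → ZMod 2))
    (hξ : ξ = LinearMap.range Hx.transpose.mulVecLin)
    (hη : η = LinearMap.range Hz.transpose.mulVecLin)
    (α αperp : Submodule (ZMod 2) (Fin n → ZMod 2))
    (hαperp : αperp = (stdBilinForm n).orthogonal α)
    (lx lz lx' lz' : ℤ)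
    (hlx : lx = (finrank (ZMod 2)
        ((LinearMap.ker Hz.mulVecLin ⊓ α) ⊔ ξ : Submodule (ZMod 2) (Fin n → ZMod 2)) : ℤ)
      - finrank (ZMod 2) ξ)
    (hlz : lz = (finrank (ZMod 2)
        ((LinearMap.ker Hx.mulVecLin ⊓ α) ⊔ η : Submodule (ZMod 2) (Fin n → ZMod 2)) : ℤ)
      - finrank (ZMod 2) η)
    (hlx' : lx' = (finrank (ZMod 2)
        ((LinearMap.ker Hz.mulVecLin ⊓ αperp) ⊔ ξ : Submodule (ZMod 2) (Fin n → ZMod 2)) : ℤ)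
      - finrank (ZMod 2) ξ)
    (hlz' : lz' = (finrank (ZMod 2)
        ((LinearMap.ker Hx.mulVecLin ⊓ αperp) ⊔ η : Submodule (ZMod 2) (Fin n → ZMod 2)) : ℤ)
      - finrank (ZMod 2) η) :
    lx + lz' = k ∧ lz + lx' = k := by
  subst hαperp
  have hkerx : LinearMap.ker Hx.mulVecLin = (stdBilinForm n).orthogonal ξ := by
    rw [hξ, Hx.ker_mulVecLin_eq_orthogonal_range_transpose]
  have hkerz : LinearMap.ker Hz.mulVecLin = (stdBilinForm n).orthogonal η := by
    rw [hη, Hz.ker_mulVecLin_eq_orthogonal_range_transpose]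
  have hξη : ξ ≤ (stdBilinForm n).orthogonal η := by
    rw [← hkerz, hξ]
    exact range_transpose_mulVecLin_le_ker (by simpa using congrArg transpose hcss)
  have hηξ : η ≤ (stdBilinForm n).orthogonal ξ := by
    rw [← hkerx, hη]
    exact range_transpose_mulVecLin_le_ker hcss
  have hrx : finrank (ZMod 2) ξ = Hx.rank := hξ ▸ Hx.rank_transpose
  have hrz : finrank (ZMod 2) η = Hz.rank := hη ▸ Hz.rank_transpose
  have h₁ := finrank_orthogonal_inf_sup_add_finrank_orthogonal_inf_sup
    (stdBilinForm_nondegenerate n) (stdBilinForm_isRefl n) hξη α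
  have h₂ := finrank_orthogonal_inf_sup_add_finrank_orthogonal_inf_sup
    (stdBilinForm_nondegenerate n) (stdBilinForm_isRefl n) hηξ α
  rw [finrank_fin_fun] at h₁ h₂
  rw [hkerz] at hlx hlx'
  rw [hkerx] at hlz hlz'
  constructor <;> omega
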